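/- arXiv:1903.12283 — 8 statements merged into one kernel-verified Lean document; each statement's English description precedes it below -/
import Mathlib

section
/- Let (L, A, ρ) be a 3-Lie-Rinehart algebra. Then for all b ∈ A and x₁, x₂, x₃, x₄ ∈ L, the operator identity (ρ(x₁,x₂)b)ρ(x₃,x₄) + (ρ(x₃,x₁)b)ρ(x₂,x₄) + (ρ(x₂,x₃)b)ρ(x₁,x₄) = 0 holds on A. -/
structure IsThreeLie (F : Type*) [Field F] (L : Type*) [AddCommGroup L] [Module F L]
    (br : L → L → L → L) : Prop where
  br_add : ∀ x x' y z, br (x + x') y z = br x y z + br x' y z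
  br_smul : ∀ (c : F) (x y z : L), br (c • x) y z = c • br x y z
  br_skew12 : ∀ x y z, br x y z = - br y x z
  br_skew23 : ∀ x y z, br x y z = - br x z y
  fi : ∀ x1 x2 x3 y2 y3, br (br x1 x2 x3) y2 y3 =
      br (br x1 y2 y3) x2 x3 + br (br x2 y2 y3) x3 x1 + br (br x3 y2 y3) x1 x2

structure IsThreeLR (F : Type*) [Field F] (A : Type*) [CommRing A] [Algebra F A]
    (L : Type*) [AddCommGroup L] [Module F L] [Module A L] [IsScalarTower F A L]
    (br : L → L → L → L) (rho : L → L → A → A) : Prop where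
  toIsThreeLie : IsThreeLie F L br
  rho_addl : ∀ x x' y a, rho (x + x') y a = rho x y a + rho x' y a
  rho_smull : ∀ (c : F) (x y : L) (a : A), rho (c • x) y a = c • rho x y a
  rho_skew : ∀ x y a, rho x y a = - rho y x a
  rho_adda : ∀ x y a b, rho x y (a + b) = rho x y a + rho x y b
  rho_smula : ∀ (x y : L) (c : F) (a : A), rho x y (c • a) = c • rho x y a
  rep1 : ∀ x1 x2 x3 x4 a, rho x1 x2 (rho x3 x4 a) - rho x3 x4 (rho x1 x2 a)
      = rho (br x1 x2 x3) x4 a - rho (br x1 x2 x4) x3 a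
  rep2 : ∀ x1 x2 x3 x4 a, rho (br x1 x2 x3) x4 a
      = rho x1 x2 (rho x3 x4 a) + rho x2 x3 (rho x1 x4 a) + rho x3 x1 (rho x2 x4 a)
  leibniz : ∀ x y a b, rho x y (a * b) = rho x y a * b + a * rho x y b
  compat : ∀ (x y : L) (a : A) (z : L), br x y (a • z) = a • br x y z + rho x y a • z
  rho_smulA : ∀ (a : A) (x y : L) (b : A), rho (a • x) y b = a * rho x y b
  rho_smulA' : ∀ (a : A) (x y : L) (b : A), rho x (a • y) b = a * rho x y b

theorem stmt1 {F : Type*} [Field F] {A : Type*} [CommRing A] [Algebra F A]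
    {L : Type*} [AddCommGroup L] [Module F L] [Module A L] [IsScalarTower F A L]
    (br : L → L → L → L) (rho : L → L → A → A)
    (h : IsThreeLR F A L br rho) (b : A) (x1 x2 x3 x4 : L) (a : A) :
    rho x1 x2 b * rho x3 x4 a + rho x3 x1 b * rho x2 x4 a
      + rho x2 x3 b * rho x1 x4 a = 0 := by
  have H := h.rep2 x1 x2 x3 (b • x4) a
  rw [h.rho_smulA', h.rho_smulA', h.rho_smulA', h.rho_smulA',
    h.leibniz, h.leibniz, h.leibniz] at H
  linear_combination b * h.rep2 x1 x2 x3 x4 a - H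
end

section
/- Let (L, A, ρ) be a 3-Lie-Rinehart algebra. Then for all a ∈ A and x₁,…,x₅ ∈ L: ρ(x₂,x₃)a·[x₁,x₄,x₅] + ρ(x₁,x₄)a·[x₂,x₃,x₅] + ρ(x₃,x₁)a·[x₂,x₄,x₅] + ρ(x₂,x₄)a·[x₃,x₁,x₅] + ρ(x₁,x₂)a·[x₃,x₄,x₅] + ρ(x₃,x₄)a·[x₁,x₂,x₅] = 0 in L. -/
theorem stmt2 {F : Type*} [Field F] {A : Type*} [CommRing A] [Algebra F A]
    {L : Type*} [AddCommGroup L] [Module F L] [Module A L] [IsScalarTower F A L]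
    (br : L → L → L → L) (rho : L → L → A → A)
    (h : IsThreeLR F A L br rho) (a : A) (x1 x2 x3 x4 x5 : L) :
    rho x2 x3 a • br x1 x4 x5 + rho x1 x4 a • br x2 x3 x5
      + rho x3 x1 a • br x2 x4 x5 + rho x2 x4 a • br x3 x1 x5
      + rho x1 x2 a • br x3 x4 x5 + rho x3 x4 a • br x1 x2 x5 = (0 : L) := by
  have T := h.toIsThreeLie
  have cyc : ∀ x y z, br x y z = br y z x := by
    intro x y z
    rw [T.br_skew12 x y z, T.br_skew23 y x z, neg_neg]
  have compat1 : ∀ (b : A) (x y z : L), br (b • x) y z = b • br x y z + rho y z b • x := by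
    intro b x y z
    rw [cyc (b • x) y z, h.compat, ← cyc x y z]
  have key := T.fi x1 x2 x3 x4 (a • x5)
  simp only [h.compat, T.br_add, compat1] at key
  rw [cyc x5 x2 x3, cyc x5 x3 x1, cyc x5 x1 x2] at key
  have f := T.fi x1 x2 x3 x4 x5
  have r := h.rep2 x1 x2 x3 x4 a
  linear_combination (norm := module) a • f + r • x5 - key
end

section
/- Let (L, A, ρ) be a 3-Lie-Rinehart algebra. On E = L ⊕ A (pairs (x,a)), define [(x,a),(y,b),(z,c)] = ([x,y,z], ρ(x,y)c + ρ(y,z)a + ρ(z,x)b), the A-action a·(y,b) = (ay, ab), and ρ̄((x,a),(y,b)) = ρ(x,y). Then (E, A, ρ̄) is a 3-Lie-Rinehart algebra. -/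
theorem stmt7 {F : Type*} [Field F] {A : Type*} [CommRing A] [Algebra F A]
    {L : Type*} [AddCommGroup L] [Module F L] [Module A L] [IsScalarTower F A L]
    (br : L → L → L → L) (rho : L → L → A → A)
    (h : IsThreeLR F A L br rho) :
    ∃ (brE : L × A → L × A → L × A → L × A) (rhoE : L × A → L × A → A → A),
      IsThreeLR F A (L × A) brE rhoE ∧
      (∀ (x y z : L) (a b c : A),
        brE (x, a) (y, b) (z, c)
          = (br x y z, rho x y c + rho y z a + rho z x b)) ∧
      (∀ (x y : L) (a b c : A), rhoE (x, a) (y, b) c = rho x y c) := by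
  have hcyc : ∀ u v w, br u v w = br v w u := by
    intro u v w
    rw [h.toIsThreeLie.br_skew12 u v w, h.toIsThreeLie.br_skew23 v u w, neg_neg]
  have hzero : ∀ x y, rho x y (0 : A) = 0 := by
    intro x y
    have h0 := h.rho_adda x y 0 0
    rw [add_zero] at h0
    exact left_eq_add.mp h0
  have hneg : ∀ (x y : L) (a : A), rho x y (-a) = - rho x y a := by
    intro x y a
    have h0 := h.rho_adda x y a (-a)
    rw [add_neg_cancel, hzero] at h0
    linear_combination -h0
  have haddr : ∀ (x y y' : L) (a : A), rho x (y + y') a = rho x y a + rho x y' a := by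
    intro x y y' a
    rw [h.rho_skew x (y + y') a, h.rho_addl y y' x a, h.rho_skew y x a, h.rho_skew y' x a]
    ring
  have hsmulr : ∀ (c : F) (x y : L) (a : A), rho x (c • y) a = c • rho x y a := by
    intro c x y a
    rw [h.rho_skew x (c • y) a, h.rho_smull c y x a, h.rho_skew y x a, smul_neg, neg_neg]
  refine ⟨fun p q r => (br p.1 q.1 r.1, rho p.1 q.1 r.2 + rho q.1 r.1 p.2 + rho r.1 p.1 q.2),
    fun p q c => rho p.1 q.1 c, ?_, fun _ _ _ _ _ _ => rfl, fun _ _ _ _ _ => rfl⟩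
  constructor
  case toIsThreeLie =>
    constructor
    case br_add =>
      rintro ⟨x, a⟩ ⟨x', a'⟩ ⟨y, b⟩ ⟨z, c⟩
      simp only [Prod.mk_add_mk, Prod.mk.injEq]
      constructor
      · exact h.toIsThreeLie.br_add x x' y z
      · rw [h.rho_addl, h.rho_adda, haddr]; ring
    case br_smul =>
      rintro c ⟨x, a⟩ ⟨y, b⟩ ⟨z, d⟩
      simp only [Prod.smul_mk, Prod.mk.injEq]
      constructor
      · exact h.toIsThreeLie.br_smul c x y z
      · rw [h.rho_smull, h.rho_smula, hsmulr, smul_add, smul_add]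
    case br_skew12 =>
      rintro ⟨x, a⟩ ⟨y, b⟩ ⟨z, c⟩
      simp only [Prod.neg_mk, Prod.mk.injEq]
      constructor
      · exact h.toIsThreeLie.br_skew12 x y z
      · rw [h.rho_skew x y c, h.rho_skew y z a, h.rho_skew z x b]; ring
    case br_skew23 =>
      rintro ⟨x, a⟩ ⟨y, b⟩ ⟨z, c⟩
      simp only [Prod.neg_mk, Prod.mk.injEq]
      constructor
      · exact h.toIsThreeLie.br_skew23 x y z
      · rw [h.rho_skew x y c, h.rho_skew y z a, h.rho_skew z x b]; ring
    case fi =>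
      rintro ⟨x1, a1⟩ ⟨x2, a2⟩ ⟨x3, a3⟩ ⟨y2, b2⟩ ⟨y3, b3⟩
      simp only [Prod.mk_add_mk, Prod.mk.injEq]
      constructor
      · exact h.toIsThreeLie.fi x1 x2 x3 y2 y3
      · rw [hcyc x1 y2 y3, hcyc x2 y2 y3, hcyc x3 y2 y3]
        simp only [h.rho_adda]
        rw [h.rho_skew y3 x1 b2, h.rho_skew y3 x2 b2, h.rho_skew y3 x3 b2]
        simp only [hneg]
        linear_combination h.rep2 x1 x2 x3 y2 b3 + h.rho_skew y3 (br x1 x2 x3) b2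
          - h.rep2 x1 x2 x3 y3 b2
          + h.rep1 y2 y3 x1 x2 a3 - h.rho_skew x1 (br y2 y3 x2) a3
          + h.rep1 y2 y3 x2 x3 a1 - h.rho_skew x2 (br y2 y3 x3) a1
          + h.rep1 y2 y3 x3 x1 a2 - h.rho_skew x3 (br y2 y3 x1) a2
  case rho_addl =>
    rintro ⟨x, a⟩ ⟨x', a'⟩ ⟨y, b⟩ c
    exact h.rho_addl x x' y c
  case rho_smull =>
    rintro c ⟨x, a⟩ ⟨y, b⟩ d
    exact h.rho_smull c x y d
  case rho_skew =>
    rintro ⟨x, a⟩ ⟨y, b⟩ c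
    exact h.rho_skew x y c
  case rho_adda =>
    rintro ⟨x, a⟩ ⟨y, b⟩ c d
    exact h.rho_adda x y c d
  case rho_smula =>
    rintro ⟨x, a⟩ ⟨y, b⟩ c d
    exact h.rho_smula x y c d
  case rep1 =>
    rintro ⟨x1, a1⟩ ⟨x2, a2⟩ ⟨x3, a3⟩ ⟨x4, a4⟩ a
    exact h.rep1 x1 x2 x3 x4 a
  case rep2 =>
    rintro ⟨x1, a1⟩ ⟨x2, a2⟩ ⟨x3, a3⟩ ⟨x4, a4⟩ a
    exact h.rep2 x1 x2 x3 x4 a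
  case leibniz =>
    rintro ⟨x, a⟩ ⟨y, b⟩ c d
    exact h.leibniz x y c d
  case compat =>
    rintro ⟨x, b1⟩ ⟨y, b2⟩ a ⟨z, b3⟩
    simp only [Prod.smul_mk, Prod.mk_add_mk, Prod.mk.injEq, smul_eq_mul]
    constructor
    · exact h.compat x y a z
    · rw [h.leibniz x y a b3, h.rho_smulA, h.rho_smulA']
      ring
  case rho_smulA =>
    rintro a ⟨x, b⟩ ⟨y, c⟩ d
    exact h.rho_smulA a x y d
  case rho_smulA' =>
    rintro a ⟨x, b⟩ ⟨y, c⟩ d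
    exact h.rho_smulA' a x y d
end

section
/- Let (L, A, ρ) be a 3-Lie-Rinehart algebra, (R, A) an abelian 3-Lie A-algebra, and (R, β) a 3-Lie algebra L-module. Then (R, β) is an (L, A, ρ)-module (i.e., β is an action) if and only if the semidirect product L ⋉ R, with bracket [x₁+r₁, x₂+r₂, x₃+r₃] = [x₁,x₂,x₃] + β(x₁,x₂)r₃ + β(x₂,x₃)r₁ + β(x₃,x₁)r₂ and anchor ρ₄(x₁+r₁, x₂+r₂) = ρ(x₁,x₂), is a 3-Lie-Rinehart algebra over A (with A-action a(x+r) = ax + ar). -/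
structure IsRep (F : Type*) [Field F]
    (L : Type*) [AddCommGroup L] [Module F L]
    (R : Type*) [AddCommGroup R] [Module F R]
    (br : L → L → L → L) (β : L → L → R → R) : Prop where
  addl : ∀ x x' y r, β (x + x') y r = β x y r + β x' y r
  smull : ∀ (c : F) (x y : L) (r : R), β (c • x) y r = c • β x y r
  skew : ∀ x y r, β x y r = - β y x r
  addr : ∀ x y r r', β x y (r + r') = β x y r + β x y r'
  smulr : ∀ (x y : L) (c : F) (r : R), β x y (c • r) = c • β x y r
  rep1 : ∀ x1 x2 x3 x4 r, β x1 x2 (β x3 x4 r) - β x3 x4 (β x1 x2 r)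
      = β (br x1 x2 x3) x4 r - β (br x1 x2 x4) x3 r
  rep2 : ∀ x1 x2 x3 x4 r, β (br x1 x2 x3) x4 r
      = β x1 x2 (β x3 x4 r) + β x2 x3 (β x1 x4 r) + β x3 x1 (β x2 x4 r)

structure IsLRMod (F : Type*) [Field F] (A : Type*) [CommRing A] [Algebra F A]
    (L : Type*) [AddCommGroup L] [Module F L] [Module A L] [IsScalarTower F A L]
    (R : Type*) [AddCommGroup R] [Module F R] [Module A R] [IsScalarTower F A R]
    (br : L → L → L → L) (rho : L → L → A → A) (β : L → L → R → R) : Prop where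
  toIsRep : IsRep F L R br β
  alin : ∀ (a : A) (x y : L) (r : R), β (a • x) y r = a • β x y r
  alin' : ∀ (a : A) (x y : L) (r : R), β x (a • y) r = a • β x y r
  compat : ∀ (x y : L) (a : A) (r : R), β x y (a • r) = a • β x y r + rho x y a • r

section Helpers

variable {F : Type*} [Field F] {L : Type*} [AddCommGroup L] [Module F L]
  {R : Type*} [AddCommGroup R] [Module F R] {br : L → L → L → L} {β : L → L → R → R}

lemma rep_addl2 (hrep : IsRep F L R br β) (x y y' : L) (r : R) :
    β x (y + y') r = β x y r + β x y' r := by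
  rw [hrep.skew, hrep.addl, hrep.skew y x, hrep.skew y' x]; abel

lemma rep_smull2 (hrep : IsRep F L R br β) (c : F) (x y : L) (r : R) :
    β x (c • y) r = c • β x y r := by
  rw [hrep.skew, hrep.smull, hrep.skew, smul_neg, neg_neg]

lemma rep_zero (hrep : IsRep F L R br β) (x y : L) : β x y (0 : R) = 0 := by
  have h0 : β x y 0 + β x y 0 = β x y 0 + 0 := by
    rw [← hrep.addr, add_zero, add_zero]
  exact add_left_cancel h0

lemma rep_neg (hrep : IsRep F L R br β) (x y : L) (r : R) : β x y (-r) = - β x y r := by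
  have h0 : β x y (-r) + β x y r = 0 := by
    rw [← hrep.addr, neg_add_cancel, rep_zero hrep]
  exact eq_neg_of_add_eq_zero_left h0

lemma rep_comm (hrep : IsRep F L R br β) (a b c d : L) (r : R) :
    β a b (β c d r) = β c d (β a b r) + β (br a b c) d r - β (br a b d) c r := by
  have h1 := hrep.rep1 a b c d r
  calc β a b (β c d r) = β c d (β a b r) + (β a b (β c d r) - β c d (β a b r)) := by abel
    _ = _ := by rw [h1]; abel

lemma br_cyc (hL : IsThreeLie F L br) (a b c : L) : br a b c = br c a b := by
  conv_rhs => rw [hL.br_skew12, hL.br_skew23, neg_neg]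

end Helpers

theorem stmt14 {F : Type*} [Field F] {A : Type*} [CommRing A] [Algebra F A]
    {L : Type*} [AddCommGroup L] [Module F L] [Module A L] [IsScalarTower F A L]
    {R : Type*} [AddCommGroup R] [Module F R] [Module A R] [IsScalarTower F A R]
    (br : L → L → L → L) (rho : L → L → A → A)
    (h : IsThreeLR F A L br rho)
    (β : L → L → R → R) (hrep : IsRep F L R br β) :
    IsLRMod F A L R br rho β ↔
      IsThreeLR F A (L × R)
        (fun p1 p2 p3 =>
          (br p1.1 p2.1 p3.1,
            β p1.1 p2.1 p3.2 + β p2.1 p3.1 p1.2 + β p3.1 p1.1 p2.2))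
        (fun p q a => rho p.1 q.1 a) := by
  have hL := h.toIsThreeLie
  constructor
  · intro hm
    refine
      { toIsThreeLie :=
        { br_add := ?_, br_smul := ?_, br_skew12 := ?_, br_skew23 := ?_, fi := ?_ },
        rho_addl := ?_, rho_smull := ?_, rho_skew := ?_, rho_adda := ?_, rho_smula := ?_,
        rep1 := ?_, rep2 := ?_, leibniz := ?_, compat := ?_, rho_smulA := ?_, rho_smulA' := ?_ }
    · rintro ⟨x, rx⟩ ⟨x', rx'⟩ ⟨y, ry⟩ ⟨z, rz⟩
      simp only [Prod.mk_add_mk, Prod.mk.injEq]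
      refine ⟨hL.br_add x x' y z, ?_⟩
      rw [hrep.addl, rep_addl2 hrep, hrep.addr]
      abel
    · rintro c ⟨x, rx⟩ ⟨y, ry⟩ ⟨z, rz⟩
      simp only [Prod.smul_mk, Prod.mk.injEq]
      refine ⟨hL.br_smul c x y z, ?_⟩
      rw [hrep.smull, rep_smull2 hrep, hrep.smulr, smul_add, smul_add]
    · rintro ⟨x, rx⟩ ⟨y, ry⟩ ⟨z, rz⟩
      simp only [Prod.neg_mk, Prod.mk.injEq]
      refine ⟨hL.br_skew12 x y z, ?_⟩
      rw [hrep.skew x y rz, hrep.skew y z rx, hrep.skew z x ry]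
      rw [hrep.skew z y rx, hrep.skew x z ry]
      abel
    · rintro ⟨x, rx⟩ ⟨y, ry⟩ ⟨z, rz⟩
      simp only [Prod.neg_mk, Prod.mk.injEq]
      refine ⟨hL.br_skew23 x y z, ?_⟩
      rw [hrep.skew x y rz, hrep.skew y z rx, hrep.skew z x ry]
      rw [hrep.skew y x rz, hrep.skew x z ry]
      abel
    · rintro ⟨x1, r1⟩ ⟨x2, r2⟩ ⟨x3, r3⟩ ⟨x4, r4⟩ ⟨x5, r5⟩
      simp only [Prod.mk_add_mk, Prod.mk.injEq]
      refine ⟨hL.fi x1 x2 x3 x4 x5, ?_⟩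
      rw [hrep.addr x4 x5, hrep.addr x4 x5,
        hrep.addr x2 x3, hrep.addr x2 x3,
        hrep.addr x3 x1, hrep.addr x3 x1,
        hrep.addr x1 x2, hrep.addr x1 x2]
      rw [hrep.rep2 x1 x2 x3 x4 r5]
      rw [hrep.skew x5 (br x1 x2 x3) r4, hrep.rep2 x1 x2 x3 x5 r4]
      rw [rep_comm hrep x4 x5 x2 x3 r1, rep_comm hrep x4 x5 x3 x1 r2,
        rep_comm hrep x4 x5 x1 x2 r3]
      rw [br_cyc hL x4 x5 x1, br_cyc hL x4 x5 x2, br_cyc hL x4 x5 x3]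
      rw [hrep.skew x3 (br x1 x4 x5) r2, hrep.skew x1 (br x2 x4 x5) r3,
        hrep.skew x2 (br x3 x4 x5) r1]
      rw [hrep.skew x5 x1 r4, hrep.skew x5 x2 r4, hrep.skew x5 x3 r4,
        rep_neg hrep x2 x3, rep_neg hrep x3 x1, rep_neg hrep x1 x2]
      abel
    · rintro ⟨x, rx⟩ ⟨x', rx'⟩ ⟨y, ry⟩ a
      exact h.rho_addl x x' y a
    · rintro c ⟨x, rx⟩ ⟨y, ry⟩ a
      exact h.rho_smull c x y a
    · rintro ⟨x, rx⟩ ⟨y, ry⟩ a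
      exact h.rho_skew x y a
    · rintro ⟨x, rx⟩ ⟨y, ry⟩ a b
      exact h.rho_adda x y a b
    · rintro ⟨x, rx⟩ ⟨y, ry⟩ c a
      exact h.rho_smula x y c a
    · rintro ⟨x1, r1⟩ ⟨x2, r2⟩ ⟨x3, r3⟩ ⟨x4, r4⟩ a
      exact h.rep1 x1 x2 x3 x4 a
    · rintro ⟨x1, r1⟩ ⟨x2, r2⟩ ⟨x3, r3⟩ ⟨x4, r4⟩ a
      exact h.rep2 x1 x2 x3 x4 a
    · rintro ⟨x, rx⟩ ⟨y, ry⟩ a b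
      exact h.leibniz x y a b
    · rintro ⟨x, rx⟩ ⟨y, ry⟩ a ⟨z, rz⟩
      simp only [Prod.smul_mk, Prod.mk_add_mk, Prod.mk.injEq]
      refine ⟨h.compat x y a z, ?_⟩
      rw [hm.compat x y a rz, hm.alin' a y z rx, hm.alin a z x ry, smul_add, smul_add]
      abel
    · rintro a ⟨x, rx⟩ ⟨y, ry⟩ b
      exact h.rho_smulA a x y b
    · rintro a ⟨x, rx⟩ ⟨y, ry⟩ b
      exact h.rho_smulA' a x y b
  · intro H
    have halin' : ∀ (a : A) (x y : L) (r : R), β x (a • y) r = a • β x y r := by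
      intro a x y r
      have hc := congrArg Prod.snd (H.compat (x, r) (x, 0) a (y, 0))
      simp only [Prod.smul_mk, Prod.mk_add_mk, smul_zero, Prod.snd, rep_zero hrep,
        zero_add, add_zero] at hc
      simpa using hc
    have halin : ∀ (a : A) (x y : L) (r : R), β (a • x) y r = a • β x y r := by
      intro a x y r
      rw [hrep.skew, halin', hrep.skew y x, smul_neg, neg_neg]
    refine { toIsRep := hrep, alin := halin, alin' := halin', compat := ?_ }
    intro x y a r
    have hc := congrArg Prod.snd (H.compat (x, 0) (y, 0) a (z := (0, r)))
    simp only [Prod.smul_mk, Prod.mk_add_mk, smul_zero, Prod.snd, rep_zero hrep,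
      zero_add, add_zero] at hc
    simpa using hc
end

section
/- Let (L, A, ρ) be a 3-Lie-Rinehart algebra, (R, A) a 3-Lie A-algebra, and f: L → R a 3-Lie A-algebra homomorphism (a 3-Lie algebra homomorphism with f(ax) = af(x)). Define β(x,y)r = [f(x), f(y), r]. Then β is an action of (L, A, ρ) on (R, A) with associated anchor 0, i.e., β(L∧L) ⊆ Der(R), (R,β) is a 3-Lie algebra L-module, β(ax,y) = aβ(x,y), and β(x,y)(ar) = aβ(x,y)r. -/
theorem stmt15 {F : Type*} [Field F] {A : Type*} [CommRing A] [Algebra F A]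
    {L : Type*} [AddCommGroup L] [Module F L] [Module A L] [IsScalarTower F A L]
    {R : Type*} [AddCommGroup R] [Module F R] [Module A R] [IsScalarTower F A R]
    (br : L → L → L → L) (rho : L → L → A → A)
    (h : IsThreeLR F A L br rho)
    (brR : R → R → R → R) (hR : IsThreeLie F R brR)
    (hRA : ∀ (r1 r2 : R) (a : A) (r3 : R), brR r1 r2 (a • r3) = a • brR r1 r2 r3)
    (f : L → R)
    (hf_add : ∀ x y, f (x + y) = f x + f y)
    (hf_smulF : ∀ (c : F) x, f (c • x) = c • f x)
    (hf_smulA : ∀ (a : A) x, f (a • x) = a • f x)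
    (hf_br : ∀ x y z, f (br x y z) = brR (f x) (f y) (f z))
    (β : L → L → R → R) (hβ : β = fun x y r => brR (f x) (f y) r) :
    -- β maps into Der(R)
    (∀ (x y : L) (r1 r2 r3 : R),
      β x y (brR r1 r2 r3)
        = brR (β x y r1) r2 r3 + brR r1 (β x y r2) r3 + brR r1 r2 (β x y r3)) ∧
    -- (R, β) is a 3-Lie algebra L-module
    IsRep F L R br β ∧
    -- A-linearity in the L-arguments
    (∀ (a : A) (x y : L) (r : R), β (a • x) y r = a • β x y r) ∧
    (∀ (a : A) (x y : L) (r : R), β x (a • y) r = a • β x y r) ∧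
    -- the associated anchor is zero: β(x,y)(ar) = aβ(x,y)r
    (∀ (x y : L) (a : A) (r : R), β x y (a • r) = a • β x y r) := by
  subst hβ
  have cyc : ∀ u v w : R, brR w u v = brR u v w := by
    intro u v w
    rw [hR.br_skew12 w u v, hR.br_skew23 u w v, neg_neg]
  have add3 : ∀ u v r r' : R, brR u v (r + r') = brR u v r + brR u v r' := by
    intro u v r r'
    rw [← cyc u v (r + r'), hR.br_add, cyc u v r, cyc u v r']
  have smul3 : ∀ (u v : R) (c : F) (r : R), brR u v (c • r) = c • brR u v r := by
    intro u v c r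
    rw [← cyc u v (c • r), hR.br_smul, cyc u v r]
  have smulA1 : ∀ (a : A) (u v r : R), brR (a • u) v r = a • brR u v r := by
    intro a u v r
    rw [cyc v r (a • u), hRA v r a u, cyc v r u]
  have der : ∀ (u v r1 r2 r3 : R), brR u v (brR r1 r2 r3)
      = brR (brR u v r1) r2 r3 + brR r1 (brR u v r2) r3 + brR r1 r2 (brR u v r3) := by
    intro u v r1 r2 r3
    rw [← cyc u v (brR r1 r2 r3), hR.fi r1 r2 r3 u v,
        cyc u v r1, cyc u v r2, cyc u v r3,
        cyc r3 r1 (brR u v r2), cyc r1 (brR u v r2) r3,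
        cyc r1 r2 (brR u v r3)]
  refine ⟨fun x y r1 r2 r3 => der (f x) (f y) r1 r2 r3, ?_, ?_, ?_, ?_⟩
  · constructor
    · intro x x' y r
      simp only [hf_add, hR.br_add]
    · intro c x y r
      simp only [hf_smulF, hR.br_smul]
    · intro x y r
      exact hR.br_skew12 (f x) (f y) r
    · intro x y r r'
      exact add3 _ _ _ _
    · intro x y c r
      exact smul3 _ _ _ _
    · intro x1 x2 x3 x4 r
      simp only [hf_br]
      rw [der (f x1) (f x2) (f x3) (f x4) r,
          hR.br_skew12 (f x3) (brR (f x1) (f x2) (f x4)) r]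
      abel
    · intro x1 x2 x3 x4 r
      simp only [hf_br]
      rw [hR.fi (f x1) (f x2) (f x3) (f x4) r,
          cyc (f x2) (f x3) (brR (f x1) (f x4) r),
          cyc (f x3) (f x1) (brR (f x2) (f x4) r),
          cyc (f x1) (f x2) (brR (f x3) (f x4) r)]
      abel
  · intro a x y r
    simp only [hf_smulA]
    exact smulA1 a (f x) (f y) r
  · intro a x y r
    simp only [hf_smulA]
    rw [hR.br_skew12 (f x) (a • f y) r, smulA1 a (f y) (f x) r,
        hR.br_skew12 (f y) (f x) r, smul_neg, neg_neg]
  · intro x y a r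
    exact hRA (f x) (f y) a r
end

section
/- Let (L, A, ρ) be a 3-Lie-Rinehart algebra and (R, β) an (L,A,ρ)-module (R abelian). For x ∈ L and r ∈ R define ψ(x,r): L⋉R → R by ψ(x,r)(z + r') = β(z, x)r. Then ψ(x,r) ∈ Der_β̄(L⋉R, R), i.e., ψ(x,r)([u₁,u₂,u₃]) = [ψ(x,r)u₁, ψ(x,r)u₂, ψ(x,r)u₃] + β̄(u₁,u₂)ψ(x,r)u₃ + β̄(u₂,u₃)ψ(x,r)u₁ + β̄(u₃,u₁)ψ(x,r)u₂ for all uᵢ ∈ L⋉R, where β̄(x₁+r₁,x₂+r₂) = β(x₁,x₂). -/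
theorem stmt17 {F : Type*} [Field F] {A : Type*} [CommRing A] [Algebra F A]
    {L : Type*} [AddCommGroup L] [Module F L] [Module A L] [IsScalarTower F A L]
    {R : Type*} [AddCommGroup R] [Module F R] [Module A R] [IsScalarTower F A R]
    (br : L → L → L → L) (rho : L → L → A → A)
    (h : IsThreeLR F A L br rho)
    -- R is an abelian 3-Lie A-algebra and (R, β) is an (L, A, ρ)-module
    (brR : R → R → R → R) (habel : ∀ r1 r2 r3 : R, brR r1 r2 r3 = 0)
    (β : L → L → R → R) (hmod : IsLRMod F A L R br rho β)
    -- the semidirect product bracket on L ⋉ R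
    (brS : L × R → L × R → L × R → L × R)
    (hbrS : ∀ u1 u2 u3, brS u1 u2 u3
      = (br u1.1 u2.1 u3.1,
          β u1.1 u2.1 u3.2 + β u2.1 u3.1 u1.2 + β u3.1 u1.1 u2.2))
    (x : L) (r : R)
    -- ψ(x,r)(z + r') = β(z,x)r
    (D : L × R → R) (hD : ∀ u : L × R, D u = β u.1 x r) :
    ∀ u1 u2 u3 : L × R,
      D (brS u1 u2 u3)
        = brR (D u1) (D u2) (D u3) + β u1.1 u2.1 (D u3)
          + β u2.1 u3.1 (D u1) + β u3.1 u1.1 (D u2) := by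
  intro u1 u2 u3
  simp only [hD, hbrS, habel, zero_add]
  rw [hmod.toIsRep.rep2]
end

section
/- Let (L, A, ρ) and (L', A, ρ') be 3-Lie-Rinehart algebras, f: L → L' a 3-Lie-Rinehart homomorphism, and ∂: Ker(f) ↪ L the inclusion. Then (Ker(f), A, ad, ∂) is a crossed module of the 3-Lie-Rinehart algebra (L, A, ρ): ∂ is a 3-Lie algebra homomorphism and A-linear, ∂(ad(x,y)u) = [x,y,∂u], ad(∂u₁,∂u₂)u = [u₁,u₂,u], ad(x,∂u₁)u₂ = −ad(x,∂u₂)u₁, and ρ(∂u₁,∂u₂)(a) = 0 for all x,y ∈ L, u,u₁,u₂ ∈ Ker(f), a ∈ A. -/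
theorem stmt18 {F : Type*} [Field F] {A : Type*} [CommRing A] [Algebra F A]
    {L : Type*} [AddCommGroup L] [Module F L] [Module A L] [IsScalarTower F A L]
    {L' : Type*} [AddCommGroup L'] [Module F L'] [Module A L'] [IsScalarTower F A L']
    (br : L → L → L → L) (rho : L → L → A → A)
    (br' : L' → L' → L' → L') (rho' : L' → L' → A → A)
    (h : IsThreeLR F A L br rho) (h' : IsThreeLR F A L' br' rho')
    -- f is a 3-Lie-Rinehart homomorphism
    (f : L → L')
    (hf_add : ∀ x y, f (x + y) = f x + f y)
    (hf_smulF : ∀ (c : F) x, f (c • x) = c • f x)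
    (hf_smulA : ∀ (a : A) x, f (a • x) = a • f x)
    (hf_br : ∀ x y z, f (br x y z) = br' (f x) (f y) (f z))
    (hf_rho : ∀ (x y : L) (a : A), rho' (f x) (f y) a = rho x y a)
    (K : Set L) (hK : K = {x : L | f x = 0}) :
    -- Ker(f) is a 3-Lie ideal of L closed under the A-action
    (∀ u ∈ K, ∀ v ∈ K, u + v ∈ K) ∧
    (∀ (c : F), ∀ u ∈ K, c • u ∈ K) ∧
    (∀ (a : A), ∀ u ∈ K, a • u ∈ K) ∧
    (∀ x y : L, ∀ u ∈ K, br x y u ∈ K) ∧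
    -- crossed module axioms for ∂ = inclusion and β = ad:
    -- (1) ∂(ad(x,y)u) = [x,y,∂u] and (2) ad(∂u₁,∂u₂)u = [u₁,u₂,u] hold trivially;
    -- (3) ad(x,∂u₁)u₂ = −ad(x,∂u₂)u₁
    (∀ x : L, ∀ u1 ∈ K, ∀ u2 ∈ K, br x u1 u2 = - br x u2 u1) ∧
    -- (4) ∂(a•u) = a•∂(u) holds trivially; (5) ρ(∂u₁,∂u₂)(a) = 0
    (∀ u1 ∈ K, ∀ u2 ∈ K, ∀ a : A, rho u1 u2 a = 0) := by

  subst hK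
  have hbr0 : ∀ y z : L', br' 0 y z = 0 := by
    intro y z
    have := h'.toIsThreeLie.br_smul (0 : F) 0 y z
    simpa using this
  have hrho0 : ∀ (y : L') (a : A), rho' 0 y a = 0 := by
    intro y a
    have := h'.rho_smull (0 : F) 0 y a
    simpa using this
  refine ⟨?_, ?_, ?_, ?_, ?_, ?_⟩
  · intro u hu v hv
    simp only [Set.mem_setOf_eq] at *
    rw [hf_add, hu, hv, add_zero]
  · intro c u hu
    simp only [Set.mem_setOf_eq] at *
    rw [hf_smulF, hu, smul_zero]
  · intro a u hu
    simp only [Set.mem_setOf_eq] at *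
    rw [hf_smulA, hu, smul_zero]
  · intro x y u hu
    simp only [Set.mem_setOf_eq] at *
    rw [hf_br, hu]
    rw [h'.toIsThreeLie.br_skew23, h'.toIsThreeLie.br_skew12, hbr0, neg_zero, neg_zero]
  · intro x u1 _ u2 _
    exact h.toIsThreeLie.br_skew23 x u1 u2
  · intro u1 hu1 u2 hu2 a
    simp only [Set.mem_setOf_eq] at *
    rw [← hf_rho, hu1, hrho0]
end

section
/- Let (L, A, ρ) be a 3-Lie-Rinehart algebra, (R, A) a 3-Lie A-algebra, and (R, A, β, ∂) a crossed module of (L, A, ρ). Then: (1) Im(∂) is a Hypo-ideal of (L,A,ρ) (a 3-Lie ideal of L closed under the A-action); (2) Ker(∂) is an abelian ideal of the 3-Lie algebra R, i.e., [Ker(∂), Ker(∂), R] = 0, and Ker(∂) is an A-submodule of R. -/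
theorem stmt19 {F : Type*} [Field F] {A : Type*} [CommRing A] [Algebra F A]
    {L : Type*} [AddCommGroup L] [Module F L] [Module A L] [IsScalarTower F A L]
    {R : Type*} [AddCommGroup R] [Module F R] [Module A R] [IsScalarTower F A R]
    (br : L → L → L → L) (rho : L → L → A → A)
    (h : IsThreeLR F A L br rho)
    -- (R, A) is a 3-Lie A-algebra
    (brR : R → R → R → R) (hR : IsThreeLie F R brR)
    (hRA : ∀ (r1 r2 : R) (a : A) (r3 : R), brR r1 r2 (a • r3) = a • brR r1 r2 r3)
    -- β is an action of (L, A, ρ) on (R, A)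
    (β : L → L → R → R) (hrep : IsRep F L R br β)
    (hder : ∀ (x y : L) (r1 r2 r3 : R),
      β x y (brR r1 r2 r3)
        = brR (β x y r1) r2 r3 + brR r1 (β x y r2) r3 + brR r1 r2 (β x y r3))
    (halin : ∀ (a : A) (x y : L) (r : R), β (a • x) y r = a • β x y r)
    (hcompat : ∀ (x y : L) (a : A) (r : R),
      β x y (a • r) = a • β x y r + rho x y a • r)
    -- ∂ : R → L is a 3-Lie algebra homomorphism making a crossed module
    (par : R → L)
    (hpar_add : ∀ r1 r2, par (r1 + r2) = par r1 + par r2)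
    (hpar_smulF : ∀ (c : F) r, par (c • r) = c • par r)
    (hpar_br : ∀ r1 r2 r3, par (brR r1 r2 r3) = br (par r1) (par r2) (par r3))
    (hcm1 : ∀ (x y : L) (r : R), par (β x y r) = br x y (par r))
    (hcm2 : ∀ r1 r2 r : R, β (par r1) (par r2) r = brR r1 r2 r)
    (hcm3 : ∀ (x : L) (r1 r2 : R), β x (par r1) r2 = - β x (par r2) r1)
    (hcm4 : ∀ (a : A) (r : R), par (a • r) = a • par r)
    (hcm5 : ∀ (r1 r2 : R) (a : A), rho (par r1) (par r2) a = 0) :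
    -- (1) Im(∂) is a Hypo-ideal of (L, A, ρ)
    (∀ r1 r2 : R, par r1 + par r2 ∈ Set.range par) ∧
    (∀ (a : A) (r : R), a • par r ∈ Set.range par) ∧
    (∀ (x y : L) (r : R), br x y (par r) ∈ Set.range par) ∧
    -- (2) Ker(∂) is an abelian ideal of R and an A-submodule
    (∀ r1 r2 : R, par r1 = 0 → par r2 = 0 → par (r1 + r2) = 0) ∧
    (∀ (a : A) (r : R), par r = 0 → par (a • r) = 0) ∧
    (∀ r1 r2 : R, par r1 = 0 → par r2 = 0 → ∀ r : R, brR r1 r2 r = 0) ∧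
    (∀ (r1 : R), par r1 = 0 → ∀ r2 r : R, par (brR r1 r2 r) = 0) := by

  have hbr0 : ∀ y z, br 0 y z = 0 := by
    intro y z
    have := h.toIsThreeLie.br_add 0 0 y z
    simp at this
    exact this
  have hβ0 : ∀ y r, β 0 y r = 0 := by
    intro y r
    have := hrep.addl 0 0 y r
    simp at this
    exact this
  refine ⟨?_, ?_, ?_, ?_, ?_, ?_, ?_⟩
  · intro r1 r2; exact ⟨r1 + r2, hpar_add r1 r2⟩
  · intro a r; exact ⟨a • r, hcm4 a r⟩
  · intro x y r; exact ⟨β x y r, hcm1 x y r⟩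
  · intro r1 r2 h1 h2; rw [hpar_add, h1, h2, add_zero]
  · intro a r hr; rw [hcm4, hr, smul_zero]
  · intro r1 r2 h1 h2 r
    rw [← hcm2, h1, hβ0]
  · intro r1 h1 r2 r
    rw [hpar_br, h1, hbr0]
end
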